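/- arXiv:1103.5639 — 3 statements merged into one kernel-verified Lean document; each statement's English description precedes it below -/
import Mathlib

section
/- Let H be a real Hilbert space of square-integrable random vectors, and let X, Y, Z be random vectors with finite second moments. The set B of random vectors of the form A·Y + b(Z), where A ranges over deterministic linear maps and b over measurable functions of Z with finite second moment, is a linear subspace of H that is closed under the L² norm. -/
open MeasureTheory Matrix ProbabilityTheory

noncomputable def condExpVec {Ω : Type} {mΩ : MeasurableSpace Ω} (μ : Measure Ω)
    (m : MeasurableSpace Ω) {N : ℕ} (Y : Ω → Fin N → ℝ) : Ω → Fin N → ℝ :=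
  fun ω i => (μ[(fun ω' => Y ω' i)|m]) ω

noncomputable def meanVec {Ω : Type} {mΩ : MeasurableSpace Ω} (μ : Measure Ω)
    {N : ℕ} (Y : Ω → Fin N → ℝ) : Fin N → ℝ := fun i => ∫ ω, Y ω i ∂μ

noncomputable def crossCov {Ω : Type} {mΩ : MeasurableSpace Ω} (μ : Measure Ω)
    {M N : ℕ} (X : Ω → Fin M → ℝ) (Y : Ω → Fin N → ℝ) : Matrix (Fin M) (Fin N) ℝ :=
  Matrix.of fun i j => ∫ ω, (X ω i - meanVec μ X i) * (Y ω j - meanVec μ Y j) ∂μ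

/-- The residual `Y - E[Y|m]` (the innovation `Ỹ`). -/
noncomputable def resid {Ω : Type} {mΩ : MeasurableSpace Ω} (μ : Measure Ω)
    (m : MeasurableSpace Ω) {N : ℕ} (Y : Ω → Fin N → ℝ) : Ω → Fin N → ℝ :=
  fun ω => Y ω - condExpVec (mΩ := mΩ) μ m Y ω

def IsMoorePenrose {m n : ℕ} (A : Matrix (Fin m) (Fin n) ℝ) (P : Matrix (Fin n) (Fin m) ℝ) : Prop :=
  A * P * A = A ∧ P * A * P = P ∧ (A * P)ᵀ = A * P ∧ (P * A)ᵀ = P * A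

/-! The estimators form `L²(σ(Z)) + {A·Y}`. By Doob–Dynkin, the elements of `L²` that are
`σ(Z)`-measurable are exactly the `b(Z)` with `b` measurable, and they form a closed subspace,
being complete. The `A·Y` range over the image of the finite-dimensional space of matrices, and a
closed subspace plus a finite-dimensional one is closed. -/

open Filter

theorem Submodule.mem_sup_range_iff {R M N : Type*} [Ring R] [AddCommGroup M] [Module R M]
    [AddCommGroup N] [Module R N] (S : Submodule R M) (φ : N →ₗ[R] M) (x : M) :
    x ∈ S ⊔ LinearMap.range φ ↔ ∃ a, x - φ a ∈ S := by
  simp only [Submodule.mem_sup, LinearMap.mem_range]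
  constructor
  · rintro ⟨y, hy, _, ⟨a, rfl⟩, rfl⟩
    exact ⟨a, by simpa using hy⟩
  · rintro ⟨a, ha⟩
    exact ⟨x - φ a, ha, φ a, ⟨a, rfl⟩, sub_add_cancel x (φ a)⟩

namespace MeasureTheory

section

variable {Ω β F : Type*} {m m0 : MeasurableSpace Ω} {μ : Measure Ω} {p : ENNReal}

theorem isClosed_lpMeas {𝕜 : Type*} [RCLike 𝕜] [NormedAddCommGroup F] [NormedSpace 𝕜 F]
    [CompleteSpace F] [Fact (1 ≤ p)] (hm : m ≤ m0) :
    IsClosed (lpMeas F 𝕜 m p μ : Set (Lp F p μ)) :=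
  isClosed_aestronglyMeasurable hm

theorem AEStronglyMeasurable.exists_stronglyMeasurable_ae_eq_comp [mβ : MeasurableSpace β]
    [TopologicalSpace F] [TopologicalSpace.IsCompletelyMetrizableSpace F] [Nonempty F]
    {Z : Ω → β} {g : Ω → F}
    (hg : AEStronglyMeasurable[mβ.comap Z] g μ) :
    ∃ b : β → F, StronglyMeasurable b ∧ g =ᵐ[μ] b ∘ Z := by
  obtain ⟨g', hg', hgg'⟩ := hg
  obtain ⟨b, hb, rfl⟩ := hg'.exists_eq_measurable_comp
  exact ⟨b, hb, hgg'⟩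

theorem mem_lpMeas_comap_iff {𝕜 : Type*} [RCLike 𝕜] [NormedAddCommGroup F] [NormedSpace 𝕜 F]
    [CompleteSpace F] [mβ : MeasurableSpace β] {Z : Ω → β} {f : Lp F p μ} :
    f ∈ lpMeas F 𝕜 (mβ.comap Z) p μ ↔ ∃ b : β → F, StronglyMeasurable b ∧ f =ᵐ[μ] b ∘ Z := by
  rw [mem_lpMeas_iff_aestronglyMeasurable]
  refine ⟨AEStronglyMeasurable.exists_stronglyMeasurable_ae_eq_comp, ?_⟩
  rintro ⟨b, hb, hf⟩
  exact ⟨b ∘ Z, hb.comp_measurable (comap_measurable Z), hf⟩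

end

section

variable {Ω 𝕜 m n : Type*} [RCLike 𝕜] [Fintype m] [Fintype n] [MeasurableSpace Ω]
  {μ : Measure Ω} {p : ENNReal} {Y : Ω → n → 𝕜}

theorem MemLp.mulVec (hY : MemLp Y p μ) (A : Matrix m n 𝕜) :
    MemLp (fun ω => A *ᵥ Y ω) p μ :=
  (LinearMap.toContinuousLinearMap A.mulVecLin).comp_memLp' hY

noncomputable def MemLp.mulVecLp (hY : MemLp Y p μ) : Matrix m n 𝕜 →ₗ[𝕜] Lp (m → 𝕜) p μ where
  toFun A := (hY.mulVec A).toLp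
  map_add' A B := by
    rw [← MemLp.toLp_add]
    exact MemLp.toLp_congr _ _ (.of_forall fun ω => Matrix.add_mulVec A B (Y ω))
  map_smul' c A := by
    rw [RingHom.id_apply, ← MemLp.toLp_const_smul]
    exact MemLp.toLp_congr _ _ (.of_forall fun ω => Matrix.smul_mulVec c A (Y ω))

theorem MemLp.mulVecLp_ae_eq (hY : MemLp Y p μ) (A : Matrix m n 𝕜) :
    hY.mulVecLp A =ᵐ[μ] fun ω => A *ᵥ Y ω :=
  (hY.mulVec A).coeFn_toLp

end

end MeasureTheory

theorem stmt0_general {Ω : Type} [MeasurableSpace Ω] (μ : Measure Ω)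
    {M N Q : ℕ} (Y : Ω → Fin N → ℝ) (Z : Ω → Fin Q → ℝ)
    (hZm : Measurable Z) (hY2 : MemLp Y 2 μ) :
    ∃ S : Submodule ℝ (Lp (Fin M → ℝ) 2 μ),
      IsClosed (S : Set (Lp (Fin M → ℝ) 2 μ)) ∧
      ∀ f : Lp (Fin M → ℝ) 2 μ,
        f ∈ S ↔ ∃ (A : Matrix (Fin M) (Fin N) ℝ) (b : (Fin Q → ℝ) → Fin M → ℝ),
          Measurable b ∧ MemLp (fun ω => b (Z ω)) 2 μ ∧
          (f : Ω → Fin M → ℝ) =ᵐ[μ] fun ω => A.mulVec (Y ω) + b (Z ω) := by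
  refine ⟨lpMeas (Fin M → ℝ) ℝ (.comap Z inferInstance) 2 μ ⊔ LinearMap.range hY2.mulVecLp,
    Submodule.isClosed_sup_finiteDimensional _ _ (isClosed_lpMeas hZm.comap_le), fun f => ?_⟩
  simp only [Submodule.mem_sup_range_iff, mem_lpMeas_comap_iff, stronglyMeasurable_iff_measurable]
  refine exists_congr fun A => exists_congr fun b => and_congr_right fun _ => ?_
  have hsub : ⇑(f - hY2.mulVecLp A) =ᵐ[μ] ⇑f - fun ω => A *ᵥ Y ω :=
    (Lp.coeFn_sub _ _).trans (EventuallyEq.rfl.sub (hY2.mulVecLp_ae_eq A))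
  have hiff : ⇑(f - hY2.mulVecLp A) =ᵐ[μ] b ∘ Z ↔ ⇑f =ᵐ[μ] fun ω => A *ᵥ Y ω + b (Z ω) :=
    eventually_congr <| hsub.mono fun ω hω => by
      rw [hω, Pi.sub_apply, Function.comp_apply, sub_eq_iff_eq_add']
  rw [← hiff]
  exact ⟨fun h => ⟨(Lp.memLp _).ae_eq h, h⟩, And.right⟩

/-- the set of estimators `A·Y + b(Z)` is a closed linear subspace of `L²`. -/
theorem stmt0 {Ω : Type} [MeasurableSpace Ω] (μ : Measure Ω) [IsProbabilityMeasure μ]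
    {M N Q : ℕ} (Y : Ω → Fin N → ℝ) (Z : Ω → Fin Q → ℝ)
    (hYm : Measurable Y) (hZm : Measurable Z) (hY2 : MemLp Y 2 μ) :
    ∃ S : Submodule ℝ (Lp (Fin M → ℝ) 2 μ),
      IsClosed (S : Set (Lp (Fin M → ℝ) 2 μ)) ∧
      ∀ f : Lp (Fin M → ℝ) 2 μ,
        f ∈ S ↔ ∃ (A : Matrix (Fin M) (Fin N) ℝ) (b : (Fin Q → ℝ) → Fin M → ℝ),
          Measurable b ∧ MemLp (fun ω => b (Z ω)) 2 μ ∧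
          (f : Ω → Fin M → ℝ) =ᵐ[μ] fun ω => A.mulVec (Y ω) + b (Z ω) :=
  stmt0_general μ Y Z hZm hY2
end

section
/- Let X, Y, Z be square-integrable random vectors and Ỹ = Y − E[Y|Z]. The estimator X̂ = Γ_{XỸ} Γ_{ỸỸ}† Ỹ + E[X|Z] minimizes the mean squared error E[‖X − (A Y + b(Z))‖²] over all matrices A ∈ ℝ^{M×N} and all square-integrable σ(Z)-measurable functions b(Z): for every such A and b, E[‖X − X̂‖²] ≤ E[‖X − (A Y + b(Z))‖²]. -/
open MeasureTheory Matrix ProbabilityTheory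

/-- The PLMMSE estimator `X̂ = Γ_{XỸ} Γ_{ỸỸ}† Ỹ + E[X|Z]`, where `P` is a matrix
playing the role of the Moore–Penrose pseudo-inverse `Γ_{ỸỸ}†`. -/
noncomputable def plmmse {Ω : Type} {mΩ : MeasurableSpace Ω} (μ : Measure Ω)
    {M N Q : ℕ} (X : Ω → Fin M → ℝ) (Y : Ω → Fin N → ℝ) (Z : Ω → Fin Q → ℝ)
    (P : Matrix (Fin N) (Fin N) ℝ) : Ω → Fin M → ℝ :=
  fun ω =>
    (crossCov μ X (resid μ (MeasurableSpace.comap Z inferInstance) Y) * P).mulVec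
      (resid μ (MeasurableSpace.comap Z inferInstance) Y ω) +
    condExpVec μ (MeasurableSpace.comap Z inferInstance) X ω

/-! With `Ỹ = Y - E[Y|Z]` and `B = Γ_{XỸ} P`, the error of the estimator is
`e = (X - E[X|Z]) - B Ỹ`. It is orthogonal in `L²` to every `σ(Z)`-measurable square-integrable
function (the defining property of the conditional expectation) and to every coordinate of `Ỹ`,
because `B Γ_{ỸỸ} = Γ_{XỸ}`. Each coordinate of
`X̂ - (A Y + b(Z)) = (B - A) Ỹ + (E[X|Z] - A E[Y|Z] - b(Z))` lies in the span of these functions,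
so Pythagoras gives the inequality.

The identity `Γ_{XỸ} P Γ_{ỸỸ} = Γ_{XỸ}` follows from `Γ_{ỸỸ} P Γ_{ỸỸ} = Γ_{ỸỸ}` because
`ker Γ_{ỸỸ} ⊆ ker Γ_{XỸ}`: if `Γ_{ỸỸ} v = 0` then `E[(vᵀỸ)²] = 0`, so `vᵀỸ = 0` almost surely. -/

theorem Matrix.mul_mul_eq_of_ker_le {R ι κ ν : Type*} [Ring R] [Fintype κ] [Fintype ν]
    [DecidableEq κ] {S : Matrix ν κ R} {P : Matrix κ ν R} {C : Matrix ι κ R}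
    (hS : S * P * S = S) (hker : ∀ v, S *ᵥ v = 0 → C *ᵥ v = 0) : C * P * S = C := by
  have hST : S * (P * S - 1) = 0 := by
    rw [Matrix.mul_sub, Matrix.mul_one, ← Matrix.mul_assoc, hS, sub_self]
  have hCT : C * (P * S - 1) = 0 := by
    refine Matrix.ext_iff_mulVec.mpr fun v => ?_
    rw [← mulVec_mulVec, zero_mulVec]
    exact hker _ (by rw [mulVec_mulVec, hST, zero_mulVec])
  rw [Matrix.mul_assoc, ← sub_eq_zero, ← hCT, Matrix.mul_sub, Matrix.mul_one]

section Orthogonality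

variable {Ω : Type} {m : MeasurableSpace Ω} [mΩ : MeasurableSpace Ω] {μ : Measure Ω}

def integralOrthogonal (μ : Measure Ω) (f : Ω → ℝ) : Submodule ℝ (Ω → ℝ) where
  carrier := {g | MemLp g 2 μ ∧ Integrable (fun ω => f ω * g ω) μ ∧ ∫ ω, f ω * g ω ∂μ = 0}
  zero_mem' := by simp
  add_mem' := by
    rintro g h ⟨hg, hfg, hg0⟩ ⟨hh, hfh, hh0⟩
    simp only [Set.mem_ofPred_eq, Pi.add_apply, mul_add]
    exact ⟨hg.add hh, hfg.add hfh, by rw [integral_add hfg hfh, hg0, hh0, add_zero]⟩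
  smul_mem' := by
    rintro c g ⟨hg, hfg, hg0⟩
    simp only [Set.mem_ofPred_eq, Pi.smul_apply, smul_eq_mul, mul_left_comm _ c]
    exact ⟨hg.const_smul c, hfg.const_mul c, by rw [integral_const_mul, hg0, mul_zero]⟩

variable {f g : Ω → ℝ}

lemma mem_integralOrthogonal_of_memLp (hf : MemLp f 2 μ) (hg : MemLp g 2 μ)
    (h : ∫ ω, f ω * g ω ∂μ = 0) : g ∈ integralOrthogonal μ f :=
  ⟨hg, hf.integrable_mul hg, h⟩

lemma integralOrthogonal_symm (hf : MemLp f 2 μ) (hg : g ∈ integralOrthogonal μ f) :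
    f ∈ integralOrthogonal μ g :=
  mem_integralOrthogonal_of_memLp hg.1 hf (by simpa only [mul_comm] using hg.2.2)

lemma integral_sq_le_integral_add_sq (hf : MemLp f 2 μ) (hg : g ∈ integralOrthogonal μ f) :
    ∫ ω, f ω ^ 2 ∂μ ≤ ∫ ω, (f ω + g ω) ^ 2 ∂μ := by
  obtain ⟨hg2, hfg, hfg0⟩ := hg
  have hexpand : ∫ ω, (f ω + g ω) ^ 2 ∂μ
      = ∫ ω, f ω ^ 2 ∂μ + 2 * ∫ ω, f ω * g ω ∂μ + ∫ ω, g ω ^ 2 ∂μ := by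
    simp only [add_sq, mul_assoc]
    rw [integral_add _ hg2.integrable_sq, integral_add hf.integrable_sq (hfg.const_mul 2),
      integral_const_mul]
    exact hf.integrable_sq.add (hfg.const_mul 2)
  rw [hexpand, hfg0]
  linarith [integral_nonneg (μ := μ) (f := fun ω => g ω ^ 2) fun ω => sq_nonneg _]

lemma integral_sum_sq_le_integral_sum_add_sq {ι : Type*} [Fintype ι] {e d : Ω → ι → ℝ}
    (he : ∀ i, MemLp (e · i) 2 μ) (hd : ∀ i, (d · i) ∈ integralOrthogonal μ (e · i)) :
    ∫ ω, ∑ i, e ω i ^ 2 ∂μ ≤ ∫ ω, ∑ i, (e ω i + d ω i) ^ 2 ∂μ := by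
  rw [integral_finsetSum _ fun i _ => (he i).integrable_sq,
    integral_finsetSum (f := fun i ω => (e ω i + d ω i) ^ 2) _
      fun i _ => ((he i).add (hd i).1).integrable_sq]
  exact Finset.sum_le_sum fun i _ => integral_sq_le_integral_add_sq (he i) (hd i)

lemma sub_condExp_mem_integralOrthogonal [IsFiniteMeasure μ] (hm : m ≤ mΩ) (hf : MemLp f 2 μ)
    (hg : MemLp g 2 μ) (hgm : StronglyMeasurable[m] g) :
    f - μ[f|m] ∈ integralOrthogonal μ g := by
  have hfc : MemLp (μ[f|m]) 2 μ := hf.condExp one_le_two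
  have hgf : Integrable (fun ω => g ω * f ω) μ := hg.integrable_mul hf
  have hgfc : Integrable (fun ω => g ω * (μ[f|m]) ω) μ := hg.integrable_mul hfc
  refine mem_integralOrthogonal_of_memLp hg (hf.sub hfc) ?_
  have hpull : ∫ ω, g ω * f ω ∂μ = ∫ ω, g ω * (μ[f|m]) ω ∂μ := by
    rw [← integral_condExp hm]
    exact integral_congr_ae <|
      condExp_mul_of_stronglyMeasurable_left hgm hgf (hf.integrable one_le_two)
  simp only [Pi.sub_apply, mul_sub]
  rw [integral_sub hgf hgfc, hpull, sub_self]

end Orthogonality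

section SecondMoment

variable {Ω : Type} [MeasurableSpace Ω] {μ : Measure Ω}

noncomputable def secondMoment (μ : Measure Ω) {ι κ : Type*} (U : Ω → ι → ℝ) (W : Ω → κ → ℝ) :
    Matrix ι κ ℝ :=
  Matrix.of fun i j => ∫ ω, U ω i * W ω j ∂μ

variable {ι κ ν : Type*}

lemma memLp_mulVec_apply [Fintype κ] {p : ENNReal} {V : Ω → κ → ℝ} (hV : ∀ k, MemLp (V · k) p μ)
    (B : Matrix ι κ ℝ) (i : ι) : MemLp (fun ω => (B *ᵥ V ω) i) p μ :=
  memLp_finsetSum _ fun k _ => (hV k).const_mul (B i k)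

lemma secondMoment_mulVec_apply [Fintype κ] {U : Ω → ι → ℝ} {W : Ω → κ → ℝ} {i : ι}
    (hUW : ∀ j, Integrable (fun ω => U ω i * W ω j) μ) (v : κ → ℝ) :
    (secondMoment μ U W *ᵥ v) i = ∫ ω, U ω i * (W ω ⬝ᵥ v) ∂μ := by
  simp only [mulVec, dotProduct, secondMoment, of_apply, Finset.mul_sum, ← mul_assoc]
  rw [integral_finsetSum _ fun j _ => (hUW j).mul_const (v j)]
  simp only [integral_mul_const]

lemma secondMoment_sub_mulVec [Fintype ν] {U : Ω → ι → ℝ} {V : Ω → ν → ℝ} {W : Ω → κ → ℝ}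
    (hU : ∀ i, MemLp (U · i) 2 μ) (hV : ∀ k, MemLp (V · k) 2 μ) (hW : ∀ j, MemLp (W · j) 2 μ)
    (B : Matrix ι ν ℝ) :
    secondMoment μ (fun ω => U ω - B *ᵥ V ω) W = secondMoment μ U W - B * secondMoment μ V W := by
  ext i j
  have hUW : Integrable (fun ω => U ω i * W ω j) μ := (hU i).integrable_mul (hW j)
  have hBV : ∀ k, Integrable (fun ω => B i k * (V ω k * W ω j)) μ :=
    fun k => ((hV k).integrable_mul (hW j)).const_mul _
  simp only [secondMoment, Matrix.sub_apply, of_apply, mul_apply, Pi.sub_apply, mulVec,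
    dotProduct, sub_mul, Finset.sum_mul, mul_assoc]
  rw [integral_sub hUW (integrable_finsetSum _ fun k _ => hBV k),
    integral_finsetSum _ fun k _ => hBV k]
  simp only [integral_const_mul]

lemma secondMoment_mulVec_eq_zero [Fintype κ] {U : Ω → ι → ℝ} {W : Ω → κ → ℝ}
    (hU : ∀ i, MemLp (U · i) 2 μ) (hW : ∀ j, MemLp (W · j) 2 μ) {v : κ → ℝ}
    (hv : secondMoment μ W W *ᵥ v = 0) : secondMoment μ U W *ᵥ v = 0 := by
  set u : Ω → ℝ := fun ω => W ω ⬝ᵥ v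
  have hu_eq : ∑ j, v j • (W · j) = u := by
    ext ω
    simp [u, dotProduct, Finset.sum_apply, mul_comm]
  have hu2 : MemLp u 2 μ := hu_eq ▸ memLp_finsetSum' _ fun j _ => (hW j).const_smul (v j)
  have hWu : ∀ j, (W · j) ∈ integralOrthogonal μ u := fun j =>
    integralOrthogonal_symm (hW j) <| mem_integralOrthogonal_of_memLp (hW j) hu2 <| by
      rw [← secondMoment_mulVec_apply (fun k => (hW j).integrable_mul (hW k)), hv, Pi.zero_apply]
  have huu : u ∈ integralOrthogonal μ u := by
    have h : ∑ j, v j • (W · j) ∈ integralOrthogonal μ u :=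
      Submodule.sum_mem _ fun j _ => Submodule.smul_mem _ _ (hWu j)
    rwa [hu_eq] at h
  have hu0 : u =ᵐ[μ] 0 := by
    have hsq : (fun ω => u ω * u ω) =ᵐ[μ] 0 :=
      (integral_eq_zero_iff_of_nonneg (fun ω => mul_self_nonneg (u ω)) huu.2.1).mp huu.2.2
    filter_upwards [hsq] with ω h
    exact mul_self_eq_zero.mp h
  ext i
  rw [secondMoment_mulVec_apply (fun j => (hU i).integrable_mul (hW j)), Pi.zero_apply]
  refine integral_eq_zero_of_ae ?_
  filter_upwards [hu0] with ω hω
  change U ω i * u ω = 0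
  rw [hω, Pi.zero_apply, mul_zero]

end SecondMoment

section Innovation

variable {Ω : Type} {m : MeasurableSpace Ω} [mΩ : MeasurableSpace Ω] {μ : Measure Ω}
  {M N : ℕ} {U : Ω → Fin M → ℝ} {Y : Ω → Fin N → ℝ}

lemma memLp_resid (hY : ∀ j, MemLp (Y · j) 2 μ) (j : Fin N) :
    MemLp (resid μ m Y · j) 2 μ :=
  (hY j).sub ((hY j).condExp one_le_two)

lemma resid_mem_integralOrthogonal [IsFiniteMeasure μ] (hm : m ≤ mΩ) (hY : ∀ j, MemLp (Y · j) 2 μ)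
    {g : Ω → ℝ} (hg : MemLp g 2 μ) (hgm : StronglyMeasurable[m] g) (j : Fin N) :
    (resid μ m Y · j) ∈ integralOrthogonal μ g :=
  sub_condExp_mem_integralOrthogonal hm (hY j) hg hgm

lemma meanVec_resid [IsFiniteMeasure μ] (hm : m ≤ mΩ) (hY : ∀ j, MemLp (Y · j) 2 μ) :
    meanVec μ (resid μ m Y) = 0 := by
  ext j
  simpa [meanVec] using
    (resid_mem_integralOrthogonal hm hY (memLp_const 1) stronglyMeasurable_const j).2.2

lemma crossCov_eq_secondMoment [IsFiniteMeasure μ] {W : Ω → Fin N → ℝ}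
    (hU : ∀ i, MemLp (U · i) 2 μ) (hW : ∀ j, MemLp (W · j) 2 μ) (hW0 : meanVec μ W = 0) :
    crossCov μ U W = secondMoment μ U W := by
  ext i j
  have hWj : ∫ ω, W ω j ∂μ = 0 := congrFun hW0 j
  have hUW : Integrable (fun ω => U ω i * W ω j) μ := (hU i).integrable_mul (hW j)
  simp only [crossCov, secondMoment, of_apply, hW0, Pi.zero_apply, sub_zero, sub_mul]
  rw [integral_sub hUW ((hW j).integrable one_le_two |>.const_mul _), integral_const_mul, hWj,
    mul_zero, sub_zero]

lemma secondMoment_resid_left [IsFiniteMeasure μ] (hm : m ≤ mΩ) (hU : ∀ i, MemLp (U · i) 2 μ)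
    (hY : ∀ j, MemLp (Y · j) 2 μ) :
    secondMoment μ (resid μ m U) (resid μ m Y) = secondMoment μ U (resid μ m Y) := by
  ext i j
  have hUc : MemLp (μ[(U · i)|m]) 2 μ := (hU i).condExp one_le_two
  have horth := resid_mem_integralOrthogonal hm hY hUc stronglyMeasurable_condExp j
  have hUY : Integrable (fun ω => U ω i * resid μ m Y ω j) μ :=
    (hU i).integrable_mul (memLp_resid hY j)
  calc ∫ ω, resid μ m U ω i * resid μ m Y ω j ∂μ
      = ∫ ω, U ω i * resid μ m Y ω j - (μ[(U · i)|m]) ω * resid μ m Y ω j ∂μ :=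
        integral_congr_ae (ae_of_all _ fun ω => sub_mul _ _ _)
    _ = ∫ ω, U ω i * resid μ m Y ω j ∂μ := by
        rw [integral_sub hUY horth.2.1, horth.2.2, sub_zero]

lemma crossCov_resid [IsFiniteMeasure μ] (hm : m ≤ mΩ) (hU : ∀ i, MemLp (U · i) 2 μ)
    (hY : ∀ j, MemLp (Y · j) 2 μ) :
    crossCov μ U (resid μ m Y) = secondMoment μ (resid μ m U) (resid μ m Y) := by
  rw [crossCov_eq_secondMoment hU (memLp_resid hY) (meanVec_resid hm hY),
    secondMoment_resid_left hm hU hY]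

lemma resid_sub_mulVec_resid_mem_integralOrthogonal [IsFiniteMeasure μ] (hm : m ≤ mΩ)
    (hU : ∀ i, MemLp (U · i) 2 μ) (hY : ∀ j, MemLp (Y · j) 2 μ) (B : Matrix (Fin M) (Fin N) ℝ)
    {g : Ω → ℝ} (hg : MemLp g 2 μ) (hgm : StronglyMeasurable[m] g) (i : Fin M) :
    (fun ω => (resid μ m U ω - B *ᵥ resid μ m Y ω) i) ∈ integralOrthogonal μ g := by
  have hsplit : (fun ω => (resid μ m U ω - B *ᵥ resid μ m Y ω) i)
      = (resid μ m U · i) - ∑ k, B i k • (resid μ m Y · k) := by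
    ext ω
    simp [mulVec, dotProduct, Finset.sum_apply]
  rw [hsplit]
  exact sub_mem (resid_mem_integralOrthogonal hm hU hg hgm i) <|
    Submodule.sum_mem _ fun k _ => Submodule.smul_mem _ _ <|
      resid_mem_integralOrthogonal hm hY hg hgm k

lemma mulVec_resid_sub_mulVec_add_mem_integralOrthogonal
    (hY : ∀ j, MemLp (Y · j) 2 μ) {f : Ω → ℝ}
    (hfY : ∀ j, (resid μ m Y · j) ∈ integralOrthogonal μ f)
    (hfm : ∀ w, MemLp w 2 μ → StronglyMeasurable[m] w → w ∈ integralOrthogonal μ f)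
    (B A : Matrix (Fin M) (Fin N) ℝ) {c : Ω → Fin M → ℝ} (hc : ∀ i, MemLp (c · i) 2 μ)
    (hcm : ∀ i, StronglyMeasurable[m] (c · i)) (i : Fin M) :
    (fun ω => (B *ᵥ resid μ m Y ω - A *ᵥ Y ω + c ω) i) ∈ integralOrthogonal μ f := by
  have hfY' : ∀ j, (Y · j) ∈ integralOrthogonal μ f := by
    intro j
    have hY_eq : (Y · j) = (resid μ m Y · j) + μ[(Y · j)|m] := by
      ext ω
      simp [resid, condExpVec]
    rw [hY_eq]
    exact add_mem (hfY j) (hfm _ ((hY j).condExp one_le_two) stronglyMeasurable_condExp)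
  have hsplit : (fun ω => (B *ᵥ resid μ m Y ω - A *ᵥ Y ω + c ω) i)
      = ∑ k, B i k • (resid μ m Y · k) - ∑ k, A i k • (Y · k) + (c · i) := by
    ext ω
    simp [mulVec, dotProduct, Finset.sum_apply]
  rw [hsplit]
  exact add_mem (sub_mem (Submodule.sum_mem _ fun k _ => Submodule.smul_mem _ _ (hfY k))
    (Submodule.sum_mem _ fun k _ => Submodule.smul_mem _ _ (hfY' k))) (hfm _ (hc i) (hcm i))

theorem innovation_estimator_mse_le [IsFiniteMeasure μ] (hm : m ≤ mΩ) {X : Ω → Fin M → ℝ}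
    (hX : ∀ i, MemLp (X · i) 2 μ) (hY : ∀ j, MemLp (Y · j) 2 μ) {P : Matrix (Fin N) (Fin N) ℝ}
    (hP : crossCov μ (resid μ m Y) (resid μ m Y) * P * crossCov μ (resid μ m Y) (resid μ m Y)
      = crossCov μ (resid μ m Y) (resid μ m Y))
    (A : Matrix (Fin M) (Fin N) ℝ) {g : Ω → Fin M → ℝ} (hg : ∀ i, MemLp (g · i) 2 μ)
    (hgm : ∀ i, StronglyMeasurable[m] (g · i)) :
    ∫ ω, ∑ i, (X ω i - ((crossCov μ X (resid μ m Y) * P) *ᵥ resid μ m Y ω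
        + condExpVec μ m X ω) i) ^ 2 ∂μ ≤
      ∫ ω, ∑ i, (X ω i - (A *ᵥ Y ω + g ω) i) ^ 2 ∂μ := by
  set Yt := resid μ m Y
  set B := crossCov μ X Yt * P
  have hC : crossCov μ X Yt = secondMoment μ (resid μ m X) Yt := crossCov_resid hm hX hY
  have hS : crossCov μ Yt Yt = secondMoment μ Yt Yt :=
    crossCov_eq_secondMoment (memLp_resid hY) (memLp_resid hY) (meanVec_resid hm hY)
  have hBS : B * crossCov μ Yt Yt = crossCov μ X Yt :=
    Matrix.mul_mul_eq_of_ker_le hP fun v hv => by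
      rw [hS] at hv
      rw [hC]
      exact secondMoment_mulVec_eq_zero (memLp_resid hX) (memLp_resid hY) hv
  set e : Ω → Fin M → ℝ := fun ω => resid μ m X ω - B *ᵥ Yt ω
  have he : ∀ i, MemLp (e · i) 2 μ := fun i =>
    (memLp_resid hX i).sub (memLp_mulVec_apply (memLp_resid hY) B i)
  have heY : secondMoment μ e Yt = 0 := by
    rw [secondMoment_sub_mulVec (memLp_resid hX) (memLp_resid hY) (memLp_resid hY), ← hC, ← hS,
      hBS, sub_self]
  have heYt : ∀ i j, (Yt · j) ∈ integralOrthogonal μ (e · i) := fun i j =>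
    mem_integralOrthogonal_of_memLp (he i) (memLp_resid hY j) (congrFun₂ heY i j)
  have hem : ∀ i w, MemLp w 2 μ → StronglyMeasurable[m] w → w ∈ integralOrthogonal μ (e · i) :=
    fun i w hw hwm => integralOrthogonal_symm hw
      (resid_sub_mulVec_resid_mem_integralOrthogonal hm hX hY B hw hwm i)
  have horth := fun i => mulVec_resid_sub_mulVec_add_mem_integralOrthogonal hY (heYt i) (hem i)
    B A (c := fun ω => condExpVec μ m X ω - g ω)
    (fun i => ((hX i).condExp one_le_two).sub (hg i))
    (fun i => stronglyMeasurable_condExp.sub (hgm i)) i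
  have hXe : ∀ ω, X ω - (B *ᵥ Yt ω + condExpVec μ m X ω) = e ω := fun ω => by
    simp only [e, resid]
    abel
  have hXed : ∀ ω, X ω - (A *ᵥ Y ω + g ω)
      = e ω + (B *ᵥ Yt ω - A *ᵥ Y ω + (condExpVec μ m X ω - g ω)) := fun ω => by
    simp only [e, resid]
    abel
  convert integral_sum_sq_le_integral_sum_add_sq he horth using 5
  · exact congrFun (hXe _) _
  · exact congrFun (hXed _) _

end Innovation

theorem stmt4_general {Ω : Type} [MeasurableSpace Ω] (μ : Measure Ω) [IsProbabilityMeasure μ]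
    {M N Q : ℕ} (X : Ω → Fin M → ℝ) (Y : Ω → Fin N → ℝ) (Z : Ω → Fin Q → ℝ)
    (hZm : Measurable Z)
    (hX2 : ∀ i, MemLp (fun ω => X ω i) 2 μ) (hY2 : ∀ i, MemLp (fun ω => Y ω i) 2 μ)
    (P : Matrix (Fin N) (Fin N) ℝ)
    (hP : IsMoorePenrose
      (crossCov μ (resid μ (MeasurableSpace.comap Z inferInstance) Y)
        (resid μ (MeasurableSpace.comap Z inferInstance) Y)) P) :
    ∀ (A : Matrix (Fin M) (Fin N) ℝ) (b : (Fin Q → ℝ) → Fin M → ℝ),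
      Measurable b → (∀ j, MemLp (fun ω => b (Z ω) j) 2 μ) →
      ∫ ω, ∑ i, (X ω i - plmmse μ X Y Z P ω i) ^ 2 ∂μ ≤
        ∫ ω, ∑ i, (X ω i - (A.mulVec (Y ω) + b (Z ω)) i) ^ 2 ∂μ := by
  intro A b hbm hb2
  exact innovation_estimator_mse_le hZm.comap_le hX2 hY2 hP.1 A hb2 fun i =>
    (((measurable_pi_apply i).comp hbm).comp (comap_measurable Z)).stronglyMeasurable

/-- the PLMMSE estimator minimizes the MSE over all estimators of the
form `A Y + b(Z)` with `A` a matrix and `b(Z)` square-integrable and measurable. -/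
theorem stmt4 {Ω : Type} [MeasurableSpace Ω] (μ : Measure Ω) [IsProbabilityMeasure μ]
    {M N Q : ℕ} (X : Ω → Fin M → ℝ) (Y : Ω → Fin N → ℝ) (Z : Ω → Fin Q → ℝ)
    (hXm : Measurable X) (hYm : Measurable Y) (hZm : Measurable Z)
    (hX2 : ∀ i, MemLp (fun ω => X ω i) 2 μ) (hY2 : ∀ i, MemLp (fun ω => Y ω i) 2 μ)
    (P : Matrix (Fin N) (Fin N) ℝ)
    (hP : IsMoorePenrose
      (crossCov μ (resid μ (MeasurableSpace.comap Z inferInstance) Y)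
        (resid μ (MeasurableSpace.comap Z inferInstance) Y)) P) :
    ∀ (A : Matrix (Fin M) (Fin N) ℝ) (b : (Fin Q → ℝ) → Fin M → ℝ),
      Measurable b → (∀ j, MemLp (fun ω => b (Z ω) j) 2 μ) →
      ∫ ω, ∑ i, (X ω i - plmmse μ X Y Z P ω i) ^ 2 ∂μ ≤
        ∫ ω, ∑ i, (X ω i - (A.mulVec (Y ω) + b (Z ω)) i) ^ 2 ∂μ :=
  stmt4_general μ X Y Z hZm hX2 hY2 P hP
end

section
/- If Y and Z are statistically independent random vectors, then the PLMMSE estimator of X from (Y, Z) equals X̂_Y^L + E[X|Z] − E[X], where X̂_Y^L = Γ_{XY} Γ_{YY}† (Y − E[Y]) + E[X] is the LMMSE estimator of X from Y. -/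
open MeasureTheory Matrix ProbabilityTheory

/-!
Independence of `Y` and `Z` gives `E[Y|Z] = E[Y]` a.s., so the innovation `Ỹ = Y - E[Y|Z]` is
a.s. the centred `Y - E[Y]`. Cross-covariances only see a.e. classes and are unchanged by
centring, hence `Γ_{XỸ} = Γ_{XY}` and `Γ_{ỸỸ} = Γ_{YY}`; uniqueness of the Moore–Penrose inverse
then identifies the two pseudo-inverses, and the two estimators agree a.s.
-/

theorem IsMoorePenrose.unique {m n : ℕ} {A : Matrix (Fin m) (Fin n) ℝ}
    {P Q : Matrix (Fin n) (Fin m) ℝ} (hP : IsMoorePenrose A P) (hQ : IsMoorePenrose A Q) :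
    P = Q := by
  obtain ⟨hAPA, hPAP, hAP, hPA⟩ := hP
  obtain ⟨hAQA, hQAQ, hAQ, hQA⟩ := hQ
  have hAP_eq : A * P = A * Q :=
    calc A * P = ((A * Q) * (A * P))ᵀ := by rw [← Matrix.mul_assoc, hAQA, hAP]
      _ = A * P * (A * Q) := by rw [transpose_mul, hAP, hAQ]
      _ = A * Q := by rw [← Matrix.mul_assoc, hAPA]
  have hPA_eq : P * A = Q * A :=
    calc P * A = ((P * A) * (Q * A))ᵀ := by rw [Matrix.mul_assoc, ← Matrix.mul_assoc A, hAQA, hPA]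
      _ = Q * A * (P * A) := by rw [transpose_mul, hPA, hQA]
      _ = Q * A := by rw [Matrix.mul_assoc, ← Matrix.mul_assoc A, hAPA]
  calc P = P * A * P := hPAP.symm
    _ = Q * A * Q := by rw [Matrix.mul_assoc, hAP_eq, ← Matrix.mul_assoc, hPA_eq]
    _ = Q := hQAQ

section Moments

variable {Ω : Type} [MeasurableSpace Ω] {μ : Measure Ω}

-- For non-integrable `f` this holds by junk values: `f - c` is not integrable either.
theorem integral_sub_integral [IsProbabilityMeasure μ] (f : Ω → ℝ) :
    ∫ ω, (f ω - ∫ ω', f ω' ∂μ) ∂μ = 0 := by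
  by_cases hf : Integrable f μ
  · simp [integral_sub hf (integrable_const _)]
  · rw [integral_undef hf]
    simpa using integral_undef hf

theorem meanVec_sub_meanVec [IsProbabilityMeasure μ] {N : ℕ} (Y : Ω → Fin N → ℝ) :
    meanVec μ (fun ω => Y ω - meanVec μ Y) = 0 :=
  funext fun j => integral_sub_integral (fun ω => Y ω j)

theorem meanVec_congr_ae {N : ℕ} {Y Y' : Ω → Fin N → ℝ} (hY : Y =ᵐ[μ] Y') :
    meanVec μ Y = meanVec μ Y' :=
  funext fun j => integral_congr_ae (hY.mono fun _ hω => congrFun hω j)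

theorem crossCov_congr_ae {M N : ℕ} {X X' : Ω → Fin M → ℝ} {Y Y' : Ω → Fin N → ℝ}
    (hX : X =ᵐ[μ] X') (hY : Y =ᵐ[μ] Y') : crossCov μ X Y = crossCov μ X' Y' := by
  ext i j
  refine integral_congr_ae ?_
  filter_upwards [hX, hY] with ω hXω hYω
  rw [meanVec_congr_ae hX, meanVec_congr_ae hY, hXω, hYω]

theorem crossCov_sub_meanVec_left [IsProbabilityMeasure μ] {M N : ℕ}
    (X : Ω → Fin M → ℝ) (Y : Ω → Fin N → ℝ) :
    crossCov μ (fun ω => X ω - meanVec μ X) Y = crossCov μ X Y := by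
  ext i j
  simp only [crossCov, of_apply, meanVec_sub_meanVec, Pi.sub_apply, Pi.zero_apply, sub_zero]

theorem crossCov_sub_meanVec_right [IsProbabilityMeasure μ] {M N : ℕ}
    (X : Ω → Fin M → ℝ) (Y : Ω → Fin N → ℝ) :
    crossCov μ X (fun ω => Y ω - meanVec μ Y) = crossCov μ X Y := by
  ext i j
  simp only [crossCov, of_apply, meanVec_sub_meanVec, Pi.sub_apply, Pi.zero_apply, sub_zero]

end Moments

section Independence

variable {Ω : Type} [MeasurableSpace Ω] {μ : Measure Ω} [IsProbabilityMeasure μ]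
  {β : Type*} [MeasurableSpace β] {N : ℕ} {Y : Ω → Fin N → ℝ} {Z : Ω → β}

theorem condExpVec_ae_eq_meanVec_of_indepFun (hY : Measurable Y) (hZ : Measurable Z)
    (hind : IndepFun Y Z μ) :
    condExpVec μ (MeasurableSpace.comap Z inferInstance) Y =ᵐ[μ] fun _ => meanVec μ Y := by
  have hcoord : ∀ i, μ[(fun ω => Y ω i)|MeasurableSpace.comap Z inferInstance]
      =ᵐ[μ] fun _ => meanVec μ Y i := fun i =>
    condExp_indep_eq hY.comap_le hZ.comap_le
      ((measurable_pi_apply i).comp (comap_measurable Y)).stronglyMeasurable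
      ((IndepFun_iff_Indep Y Z μ).mp hind)
  filter_upwards [ae_all_iff.mpr hcoord] with ω hω
  exact funext hω

theorem resid_ae_eq_sub_meanVec_of_indepFun (hY : Measurable Y) (hZ : Measurable Z)
    (hind : IndepFun Y Z μ) :
    resid μ (MeasurableSpace.comap Z inferInstance) Y =ᵐ[μ] fun ω => Y ω - meanVec μ Y := by
  filter_upwards [condExpVec_ae_eq_meanVec_of_indepFun hY hZ hind] with ω hω
  simp only [resid, hω]

end Independence

theorem stmt7_general {Ω : Type} [MeasurableSpace Ω] (μ : Measure Ω) [IsProbabilityMeasure μ]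
    {M N Q : ℕ} (X : Ω → Fin M → ℝ) (Y : Ω → Fin N → ℝ) (Z : Ω → Fin Q → ℝ)
    (hYm : Measurable Y) (hZm : Measurable Z)
    (hind : IndepFun Y Z μ)
    (P : Matrix (Fin N) (Fin N) ℝ)
    (hP : IsMoorePenrose
      (crossCov μ (resid μ (MeasurableSpace.comap Z inferInstance) Y)
        (resid μ (MeasurableSpace.comap Z inferInstance) Y)) P)
    (P' : Matrix (Fin N) (Fin N) ℝ) (hP' : IsMoorePenrose (crossCov μ Y Y) P') :
    plmmse μ X Y Z P =ᵐ[μ] fun ω =>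
      ((crossCov μ X Y * P').mulVec (Y ω - meanVec μ Y) + meanVec μ X) +
        condExpVec μ (MeasurableSpace.comap Z inferInstance) X ω - meanVec μ X := by
  have hres := resid_ae_eq_sub_meanVec_of_indepFun hYm hZm hind
  have hcrossCov : crossCov μ X (resid μ (MeasurableSpace.comap Z inferInstance) Y)
      = crossCov μ X Y := by
    rw [crossCov_congr_ae Filter.EventuallyEq.rfl hres, crossCov_sub_meanVec_right]
  have hcov : crossCov μ (resid μ (MeasurableSpace.comap Z inferInstance) Y)
      (resid μ (MeasurableSpace.comap Z inferInstance) Y) = crossCov μ Y Y := by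
    rw [crossCov_congr_ae hres hres, crossCov_sub_meanVec_left, crossCov_sub_meanVec_right]
  have hPP' : P = P' := (hcov ▸ hP).unique hP'
  filter_upwards [hres] with ω hω
  simp only [plmmse, hcrossCov, hPP', hω]
  abel

/-- if `Y` and `Z` are independent, the PLMMSE estimator equals
`X̂_Y^L + E[X|Z] - E[X]`, where `X̂_Y^L = Γ_{XY} Γ_{YY}† (Y - E[Y]) + E[X]`. -/
theorem stmt7 {Ω : Type} [MeasurableSpace Ω] (μ : Measure Ω) [IsProbabilityMeasure μ]
    {M N Q : ℕ} (X : Ω → Fin M → ℝ) (Y : Ω → Fin N → ℝ) (Z : Ω → Fin Q → ℝ)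
    (hXm : Measurable X) (hYm : Measurable Y) (hZm : Measurable Z)
    (hX2 : ∀ i, MemLp (fun ω => X ω i) 2 μ) (hY2 : ∀ i, MemLp (fun ω => Y ω i) 2 μ)
    (hind : IndepFun Y Z μ)
    (P : Matrix (Fin N) (Fin N) ℝ)
    (hP : IsMoorePenrose
      (crossCov μ (resid μ (MeasurableSpace.comap Z inferInstance) Y)
        (resid μ (MeasurableSpace.comap Z inferInstance) Y)) P)
    (P' : Matrix (Fin N) (Fin N) ℝ) (hP' : IsMoorePenrose (crossCov μ Y Y) P') :
    plmmse μ X Y Z P =ᵐ[μ] fun ω =>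
      ((crossCov μ X Y * P').mulVec (Y ω - meanVec μ Y) + meanVec μ X) +
        condExpVec μ (MeasurableSpace.comap Z inferInstance) X ω - meanVec μ X :=
  stmt7_general μ X Y Z hYm hZm hind P hP P' hP'
end
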